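/- arXiv:2505.18833 — 2 statements merged into one kernel-verified Lean document; each statement's English description precedes it below -/
import Mathlib

section
/- For every automaton-controller π^A and every initial state x₀ ∈ X, the following inequality between probabilities holds: d^∞({ω : ℕ → W | the word L ∘ traj(x₀,ω) is accepted by the Büchi automaton}) ≥ d^∞({ω : ℕ → W | the product trajectory (x_t, q_t) from (x₀, q_init) under π^A and ω satisfies q_t ∈ Acc for infinitely many t}). -/
open MeasureTheory

/-- The trajectory of the closed-loop dynamics `F` from initial state `x₀`
under the disturbance sequence `ω`. -/
def traj {X W : Type*} (F : X × W → X) (x₀ : X) (ω : ℕ → W) : ℕ → X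
  | 0 => x₀
  | t + 1 => F (traj F x₀ ω t, ω t)

/-- Büchi acceptance of an infinite word `σ` by the automaton
`(Q, qinit, Δ, Acc)`. -/
def Accepts {Q A : Type*} (qinit : Q) (Δ : Q → A → Set Q) (Acc : Set Q)
    (σ : ℕ → A) : Prop :=
  ∃ ρ : ℕ → Q, ρ 0 = qinit ∧ (∀ t, ρ (t + 1) ∈ Δ (ρ t) (σ t)) ∧
    {t | ρ t ∈ Acc}.Infinite

/-- The product trajectory `(x_t, q_t)` from `(x₀, qinit)` under the
automaton-controller `πA` and disturbance sequence `ω`. -/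
def prodTraj {X W Q : Type*} (F : X × W → X) (πA : X × Q → Q)
    (x₀ : X) (qinit : Q) (ω : ℕ → W) : ℕ → X × Q
  | 0 => (x₀, qinit)
  | t + 1 =>
      (F ((prodTraj F πA x₀ qinit ω t).1, ω t), πA (prodTraj F πA x₀ qinit ω t))

theorem prodTraj_fst {X W Q : Type*} (F : X × W → X) (πA : X × Q → Q) (x₀ : X) (qinit : Q)
    (ω : ℕ → W) (t : ℕ) : (prodTraj F πA x₀ qinit ω t).1 = traj F x₀ ω t := by
  induction t with
  | zero => rfl
  | succ t ih => simp only [prodTraj, traj, ih]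

/-- The automaton component of the product trajectory is itself a run on the word. -/
theorem accepts_of_infinite_prodTraj_snd_mem {X W Q A : Type*} (F : X × W → X) (qinit : Q)
    (Δ : Q → A → Set Q) (Acc : Set Q) (L : X → A) (πA : X × Q → Q)
    (hπAΔ : ∀ x q, πA (x, q) ∈ Δ q (L x)) (x₀ : X) (ω : ℕ → W)
    (hAcc : {t | (prodTraj F πA x₀ qinit ω t).2 ∈ Acc}.Infinite) :
    Accepts qinit Δ Acc (L ∘ traj F x₀ ω) := by
  refine ⟨fun t => (prodTraj F πA x₀ qinit ω t).2, rfl, fun t => ?_, hAcc⟩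
  rw [Function.comp_apply, ← prodTraj_fst F πA x₀ qinit ω t]
  exact hπAΔ _ _

theorem buchi_product_probability_le_general
    {X W Q A : Type*}
    [MeasurableSpace W]
    (dInf : Measure (ℕ → W))
    (F : X × W → X)
    (qinit : Q) (Δ : Q → A → Set Q)
    (Acc : Set Q)
    (L : X → A)
    (πA : X × Q → Q)
    (hπAΔ : ∀ x q, πA (x, q) ∈ Δ q (L x))
    (x₀ : X) :
    dInf {ω | {t | (prodTraj F πA x₀ qinit ω t).2 ∈ Acc}.Infinite} ≤
      dInf {ω | Accepts qinit Δ Acc (L ∘ traj F x₀ ω)} :=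
  measure_mono fun ω => accepts_of_infinite_prodTraj_snd_mem F qinit Δ Acc L πA hπAΔ x₀ ω

/-- For every automaton-controller `πA` and every initial state
`x₀`, the probability (under the i.i.d. product measure `dInf` of countably
many copies of `d`) that the word `L ∘ traj F x₀ ω` is accepted by the Büchi
automaton is at least the probability that the product trajectory visits
`Acc` (in its automaton component) infinitely many times. -/
theorem buchi_product_probability_le
    {X W Q A : Type*}
    [MeasurableSpace X] [MeasurableSpace W]
    [Fintype Q] [MeasurableSpace Q] [DiscreteMeasurableSpace Q]
    [Fintype A] [MeasurableSpace A] [DiscreteMeasurableSpace A]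
    (d : Measure W) [IsProbabilityMeasure d]
    (dInf : Measure (ℕ → W)) [IsProbabilityMeasure dInf]
    (hdInf : ∀ (n : ℕ) (s : ℕ → Set W), (∀ i, MeasurableSet (s i)) →
      dInf {ω | ∀ i < n, ω i ∈ s i} = ∏ i ∈ Finset.range n, d (s i))
    (F : X × W → X) (hF : Measurable F)
    (qinit : Q) (Δ : Q → A → Set Q) (hΔ : ∀ q σ, (Δ q σ).Nonempty)
    (Acc : Set Q)
    (L : X → A) (hL : Measurable L)
    (πA : X × Q → Q) (hπA : Measurable πA)
    (hπAΔ : ∀ x q, πA (x, q) ∈ Δ q (L x))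
    (x₀ : X) :
    dInf {ω | {t | (prodTraj F πA x₀ qinit ω t).2 ∈ Acc}.Infinite} ≤
      dInf {ω | Accepts qinit Δ Acc (L ∘ traj F x₀ ω)} :=
  buchi_product_probability_le_general dInf F qinit Δ Acc L πA hπAΔ x₀
end

section
/- Soundness of limit-deterministic Büchi supermartingale certificates: assume the LDBSM conditions (a)–(f) hold, and let p be a real number with 0 ≤ p ≤ 1 − exp(8·η^S·ε^S/(M^S)²). Then there exists an automaton-controller π^A such that for every x₀ ∈ Init, d^∞({ω : ℕ → W | the word L ∘ traj(x₀,ω) is accepted by the Büchi automaton}) ≥ d^∞({ω : ℕ → W | the product trajectory (x_t, q_t) from (x₀, q_init) under π^A and ω satisfies q_t ∈ Acc for infinitely many t}) ≥ p. -/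
open MeasureTheory

/-- The set of rejecting states: automaton states from which no accepting
state is reachable in the graph induced by the transitions. -/
def Qreject {Q A : Type*} (Δ : Q → A → Set Q) (Acc : Set Q) : Set Q :=
  {q | ∀ q', Relation.ReflTransGen (fun a b => ∃ σ : A, b ∈ Δ a σ) q q' → q' ∉ Acc}

/-- The safety condition `SafetyCond(x, q, σ, q')`: the letter `σ` holds at
`x`; the successor stays in the invariant `I` for every disturbance; the
expected value of `Vsafe` strictly decreases by at least `εS`; and the change
of `Vsafe` lies in the interval `[βS, βS + MS]` for every disturbance. -/
def SafetyCond {X W Q A : Type*} [MeasurableSpace W]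
    (d : Measure W) (F : X × W → X) (L : X → A) (I : Set (X × Q))
    (Vsafe : X × Q → ℝ) (εS MS βS : ℝ) (x : X) (q : Q) (σ : A) (q' : Q) :
    Prop :=
  L x = σ ∧ (∀ w, (F (x, w), q') ∈ I) ∧
    (∫ w, Vsafe (F (x, w), q') ∂d) ≤ Vsafe (x, q) - εS ∧
    ∀ w, βS ≤ Vsafe (x, q) - Vsafe (F (x, w), q') ∧
      Vsafe (x, q) - Vsafe (F (x, w), q') ≤ βS + MS

open Set Function Real
open scoped ENNReal NNReal

/-!
Choose the successor automaton state measurably, among those witnessing (e) or (f) (with the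
pointwise-in-`w` requirements of `SafetyCond` weakened to almost sure ones, so that the choice is
measurable). The product system is then a Markov chain on `X × Q` driven by i.i.d. disturbances.
By Hoeffding's lemma, `exp (λ • Vsafe)` with `λ = 8 εS / MS²` is a supermartingale while the chain
stays in `C = {s ∈ I | Vsafe s < 0}`, and it is at least `1` outside `C`; by Ville's inequality the
chain leaves `C` with probability at most `exp (λ ηS)`. Inside `C`, `Vlive` drops in expectation
by `εL` at every non-accepting step and rises by at most `ML` at accepting ones, so almost surely
the chain cannot stay in `C` while avoiding `Acc` from some time on. Finally, the automaton states
of the product trajectory form a run of the automaton on the observed word.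
-/

theorem lintegral_infinitePi_eq_lmarginal {ι : Type*} {X : ι → Type*} [∀ i, MeasurableSpace (X i)]
    (μ : ∀ i, Measure (X i)) [∀ i, IsProbabilityMeasure (μ i)] [DecidableEq ι] {s : Finset ι}
    {f : (∀ i, X i) → ℝ≥0∞} (hf : Measurable f) (hfs : DependsOn f s) (x : ∀ i, X i) :
    ∫⁻ y, f y ∂Measure.infinitePi μ = (∫⋯∫⁻_s, f ∂μ) x := by
  calc ∫⁻ y, f y ∂Measure.infinitePi μ
      = ∫⁻ y, f (updateFinset x s (s.restrict y)) ∂Measure.infinitePi μ :=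
        lintegral_congr fun y => hfs fun i hi => by simp [updateFinset, Finset.mem_coe.1 hi]
    _ = _ := lintegral_restrict_infinitePi μ (hf.comp measurable_updateFinset)

theorem lintegral_infinitePi_eq_lintegral_update {X : ℕ → Type*} [∀ i, MeasurableSpace (X i)]
    (μ : ∀ i, Measure (X i)) [∀ i, IsProbabilityMeasure (μ i)] {n : ℕ}
    {f : (∀ i, X i) → ℝ≥0∞} (hf : Measurable f) (hfn : DependsOn f (Iio (n + 1))) :
    ∫⁻ x, f x ∂Measure.infinitePi μ =
      ∫⁻ x, ∫⁻ y, f (update x n y) ∂μ n ∂Measure.infinitePi μ := by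
  obtain ⟨x⟩ := nonempty_of_isProbabilityMeasure (Measure.infinitePi μ)
  have hg : DependsOn (fun x => ∫⁻ y, f (update x n y) ∂μ n) (Finset.range n) :=
    fun x x' h => lintegral_congr fun y => hfn fun i hi => by
      rcases eq_or_ne i n with rfl | hin
      · simp
      · simp [update_of_ne hin, h i (by simp at hi ⊢; omega)]
  rw [lintegral_infinitePi_eq_lmarginal μ hf (s := Finset.range (n + 1)) (by simpa using hfn) x,
    Finset.range_add_one, lmarginal_insert' _ hf Finset.notMem_range_self,
    lintegral_infinitePi_eq_lmarginal μ _ hg x]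
  exact (hf.comp measurable_update').lintegral_prod_right'

theorem eq_infinitePi_of_forall_lt {W : Type*} [MeasurableSpace W] (d : Measure W)
    [IsProbabilityMeasure d] {ν : Measure (ℕ → W)}
    (hν : ∀ (n : ℕ) (s : ℕ → Set W), (∀ i, MeasurableSet (s i)) →
      ν {ω | ∀ i < n, ω i ∈ s i} = ∏ i ∈ Finset.range n, d (s i)) :
    ν = Measure.infinitePi fun _ => d := by
  classical
  refine Measure.eq_infinitePi _ fun s t ht => ?_
  obtain ⟨n, hn⟩ : ∃ n, s ⊆ Finset.range n := ⟨s.sup id + 1, fun i hi => by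
    simpa [Nat.lt_succ_iff] using Finset.le_sup (f := id) hi⟩
  have hpi : Set.pi s t = {ω | ∀ i < n, ω i ∈ if i ∈ s then t i else univ} := by
    ext ω
    simp only [Set.mem_pi, Finset.mem_coe, mem_ofPred_eq]
    refine ⟨fun h i _ => ?_, fun h i hi => by simpa [hi] using h i (by simpa using hn hi)⟩
    split_ifs with hi
    exacts [h i hi, mem_univ _]
  rw [hpi, hν n _ fun i => by split_ifs; exacts [ht i, .univ]]
  simp [apply_ite d, Finset.prod_ite_mem, Finset.inter_eq_right.2 hn]

theorem ENNReal.eq_zero_of_forall_succ_add_mul_le {L : ℕ → ℝ≥0∞} {ε a : ℝ≥0∞} (hε : ε ≠ 0)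
    (hL : L 0 ≠ ⊤) (h : ∀ k, L (k + 1) + ε * a ≤ L k) : a = 0 := by
  have hsum k : L k + k * (ε * a) ≤ L 0 := by
    induction k with
    | zero => simp
    | succ k ih =>
      calc L (k + 1) + (k + 1 : ℕ) * (ε * a) = L (k + 1) + ε * a + k * (ε * a) := by
            push_cast; ring
        _ ≤ L 0 := (add_le_add (h k) le_rfl).trans ih
  by_contra ha
  obtain ⟨k, hk⟩ := ENNReal.exists_nat_mul_gt (mul_ne_zero hε ha) hL
  exact (le_add_self.trans (hsum k)).not_gt hk

section Trajectory

variable {S W : Type*}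

theorem dependsOn_traj (G : S × W → S) (s : S) (t : ℕ) :
    DependsOn (fun ω => traj G s ω t) (Iio t) := by
  induction t with
  | zero => exact fun _ _ _ => rfl
  | succ t ih =>
    intro ω ω' h
    exact congrArg G (Prod.ext (ih fun i hi => h i (mem_Iio.2 (Nat.lt_succ_of_lt hi)))
      (h t (Nat.lt_succ_self t)))

theorem traj_update_of_le (G : S × W → S) (s : S) (ω : ℕ → W) (w : W) {t v : ℕ} (hv : v ≤ t) :
    traj G s (update ω t w) v = traj G s ω v :=
  dependsOn_traj G s v fun i hi => update_of_ne (by simp at hi; omega) w ω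

theorem traj_update_succ (G : S × W → S) (s : S) (ω : ℕ → W) (w : W) (t : ℕ) :
    traj G s (update ω t w) (t + 1) = G (traj G s ω t, w) := by
  simp only [traj, traj_update_of_le G s ω w le_rfl, update_self]

theorem dependsOn_forall_lt_traj (G : S × W → S) (s : S) (P : ℕ → Set S) (t : ℕ) :
    DependsOn (· ∈ {ω | ∀ v < t + 1, traj G s ω v ∈ P v}) (Iio t) := fun ω ω' h =>
  propext <| forall₂_congr fun v hv => by
    have hZ : traj G s ω v = traj G s ω' v :=
      dependsOn_traj G s v fun i hi => h i (by simp at hi ⊢; omega)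
    rw [hZ]

variable [MeasurableSpace S] [MeasurableSpace W] {G : S × W → S}

theorem measurable_traj (hG : Measurable G) (s : S) (t : ℕ) :
    Measurable fun ω => traj G s ω t := by
  induction t with
  | zero => exact measurable_const
  | succ t ih => exact hG.comp (ih.prodMk (measurable_pi_apply t))

theorem measurableSet_setOf_forall_lt_traj (hG : Measurable G) (s : S) {P : ℕ → Set S}
    (hP : ∀ v, MeasurableSet (P v)) (t : ℕ) :
    MeasurableSet {ω | ∀ v < t, traj G s ω v ∈ P v} := by
  simp only [ofPred_forall]
  exact .iInter fun v => .iInter fun _ => measurable_traj hG s v (hP v)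

variable (d : Measure W) [IsProbabilityMeasure d]

local notation "ℙ" => Measure.infinitePi fun _ : ℕ => d

theorem setLIntegral_traj_succ (hG : Measurable G) (s : S) {t : ℕ} {A : Set (ℕ → W)}
    (hA : MeasurableSet A) (hAt : DependsOn (· ∈ A) (Iio t)) {g : S → ℝ≥0∞} (hg : Measurable g) :
    ∫⁻ ω in A, g (traj G s ω (t + 1)) ∂ℙ =
      ∫⁻ ω in A, ∫⁻ w, g (G (traj G s ω t, w)) ∂d ∂ℙ := by
  have hdep : DependsOn (A.indicator fun ω => g (traj G s ω (t + 1))) (Iio (t + 1)) :=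
    fun ω ω' h => by
      have hA' : ω ∈ A ↔ ω' ∈ A :=
        iff_of_eq (hAt fun i hi => h i (mem_Iio.2 (Nat.lt_succ_of_lt hi)))
      have hZ : traj G s ω (t + 1) = traj G s ω' (t + 1) := dependsOn_traj G s (t + 1) h
      by_cases hω : ω ∈ A
      · simp [hω, hA'.1 hω, hZ]
      · simp [hω, mt hA'.2 hω]
  rw [← lintegral_indicator hA, ← lintegral_indicator hA,
    lintegral_infinitePi_eq_lintegral_update _ (f := A.indicator fun ω => g (traj G s ω (t + 1)))
      ((hg.comp (measurable_traj hG s _)).indicator hA) hdep]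
  refine lintegral_congr fun ω => ?_
  have hAω : ∀ w, (update ω t w ∈ A ↔ ω ∈ A) := fun w =>
    iff_of_eq (hAt fun i hi => update_of_ne (ne_of_lt hi) w ω)
  by_cases hω : ω ∈ A
  · simp [indicator, hAω, hω, traj_update_succ]
  · simp [indicator, hAω, hω]

theorem setLIntegral_traj_succ_le (hG : Measurable G) (s : S) {t : ℕ} {A : Set (ℕ → W)}
    (hA : MeasurableSet A) (hAt : DependsOn (· ∈ A) (Iio t)) {g h : S → ℝ≥0∞} (hg : Measurable g)
    (hgh : ∀ ω ∈ A, ∫⁻ w, g (G (traj G s ω t, w)) ∂d ≤ h (traj G s ω t)) :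
    ∫⁻ ω in A, g (traj G s ω (t + 1)) ∂ℙ ≤ ∫⁻ ω in A, h (traj G s ω t) ∂ℙ := by
  rw [setLIntegral_traj_succ d hG s hA hAt hg]
  exact setLIntegral_mono' hA hgh

theorem measure_compl_add_setLIntegral_le (hG : Measurable G) {C : Set S} (hC : MeasurableSet C)
    {Φ : S → ℝ≥0∞} (hΦ : Measurable Φ) (hΦC : ∀ x ∈ C, ∫⁻ w, Φ (G (x, w)) ∂d ≤ Φ x)
    (hΦout : ∀ x ∉ C, 1 ≤ Φ x) (s : S) (t : ℕ) :
    ℙ {ω | ∀ v < t, traj G s ω v ∈ C}ᶜ +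
      ∫⁻ ω in {ω | ∀ v < t, traj G s ω v ∈ C}, Φ (traj G s ω t) ∂ℙ ≤ Φ s := by
  induction t with
  | zero => simp [traj]
  | succ t ih =>
    set A := {ω | ∀ v < t, traj G s ω v ∈ C}
    set B := {ω | traj G s ω t ∈ C}
    have hA : MeasurableSet A := measurableSet_setOf_forall_lt_traj hG s (fun _ => hC) t
    have hB : MeasurableSet B := measurable_traj hG s t hC
    have hsucc : {ω | ∀ v < t + 1, traj G s ω v ∈ C} = A ∩ B := by
      ext ω; exact Nat.forall_lt_succ_right
    have hexit : ℙ (A \ B) ≤ ∫⁻ ω in A \ B, Φ (traj G s ω t) ∂ℙ := by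
      rw [← setLIntegral_one]
      exact setLIntegral_mono' (hA.diff hB) fun ω hω => hΦout _ hω.2
    have hstay := setLIntegral_traj_succ_le d hG s
      (measurableSet_setOf_forall_lt_traj hG s (fun _ => hC) (t + 1))
      (dependsOn_forall_lt_traj G s _ t) hΦ fun ω hω => hΦC _ (hω t t.lt_succ_self)
    rw [hsucc] at hstay ⊢
    calc ℙ (A ∩ B)ᶜ + ∫⁻ ω in A ∩ B, Φ (traj G s ω (t + 1)) ∂ℙ
        ≤ ℙ Aᶜ + ℙ (A \ B) + ∫⁻ ω in A ∩ B, Φ (traj G s ω t) ∂ℙ := by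
          refine add_le_add ((measure_mono fun ω hω => ?_).trans (measure_union_le _ _)) hstay
          by_cases h : ω ∈ A
          exacts [.inr ⟨h, fun h' => hω ⟨h, h'⟩⟩, .inl h]
      _ ≤ ℙ Aᶜ + ∫⁻ ω in A, Φ (traj G s ω t) ∂ℙ := by
          rw [add_assoc, ← lintegral_inter_add_sdiff (fun ω => Φ (traj G s ω t)) A hB,
            add_comm (∫⁻ _ in _ ∩ _, _ ∂_)]
          gcongr
      _ ≤ Φ s := ih

/-- Ville's maximal inequality for the nonnegative supermartingale `Φ (traj G s ω t)`, stopped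
when the trajectory leaves `C`. -/
theorem measure_exists_traj_notMem_le (hG : Measurable G) {C : Set S} (hC : MeasurableSet C)
    {Φ : S → ℝ≥0∞} (hΦ : Measurable Φ) (hΦC : ∀ x ∈ C, ∫⁻ w, Φ (G (x, w)) ∂d ≤ Φ x)
    (hΦout : ∀ x ∉ C, 1 ≤ Φ x) (s : S) :
    ℙ {ω | ∃ t, traj G s ω t ∉ C} ≤ Φ s := by
  have hmono : Monotone fun t => {ω | ∀ v < t, traj G s ω v ∈ C}ᶜ := fun t t' htt' ω hω hω' =>
    hω fun v hv => hω' v (lt_of_lt_of_le hv htt')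
  calc ℙ {ω | ∃ t, traj G s ω t ∉ C} ≤ ℙ (⋃ t, {ω | ∀ v < t, traj G s ω v ∈ C}ᶜ) :=
        measure_mono fun ω ⟨t, ht⟩ => mem_iUnion.2 ⟨t + 1, fun h => ht (h t t.lt_succ_self)⟩
    _ ≤ Φ s := by
        rw [hmono.measure_iUnion]
        exact iSup_le fun t =>
          le_self_add.trans (measure_compl_add_setLIntegral_le d hG hC hΦ hΦC hΦout s t)

theorem setLIntegral_forall_lt_traj_le (hG : Measurable G) {C : Set S} (hC : MeasurableSet C)
    {U : S → ℝ≥0∞} (hU : Measurable U) {M : ℝ≥0∞}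
    (hUC : ∀ x ∈ C, ∫⁻ w, U (G (x, w)) ∂d ≤ U x + M) (s : S) (t : ℕ) :
    ∫⁻ ω in {ω | ∀ v < t, traj G s ω v ∈ C}, U (traj G s ω t) ∂ℙ ≤ U s + t * M := by
  induction t with
  | zero => simp [traj]
  | succ t ih =>
    calc ∫⁻ ω in {ω | ∀ v < t + 1, traj G s ω v ∈ C}, U (traj G s ω (t + 1)) ∂ℙ
        ≤ ∫⁻ ω in {ω | ∀ v < t + 1, traj G s ω v ∈ C}, (U (traj G s ω t) + M) ∂ℙ :=
          setLIntegral_traj_succ_le d hG s (measurableSet_setOf_forall_lt_traj hG s (fun _ => hC) _)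
            (dependsOn_forall_lt_traj G s (fun _ => C) t) hU (h := fun x => U x + M)
            fun ω hω => hUC _ (hω t t.lt_succ_self)
      _ ≤ ∫⁻ ω in {ω | ∀ v < t, traj G s ω v ∈ C}, U (traj G s ω t) ∂ℙ + M := by
          rw [lintegral_add_right _ measurable_const, setLIntegral_const]
          exact add_le_add (lintegral_mono_set fun ω (hω : ∀ v < t + 1, _) v hv =>
            hω v (v.lt_succ_of_lt hv)) (mul_le_of_le_one_right' prob_le_one)
      _ ≤ U s + (t + 1 : ℕ) * M := by
          push_cast
          rw [add_mul, one_mul, ← add_assoc]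
          gcongr

theorem measure_forall_mem_forall_ge_notMem_eq_zero (hG : Measurable G) {C T : Set S}
    (hC : MeasurableSet C) (hT : MeasurableSet T) {U : S → ℝ≥0∞} (hU : Measurable U)
    {ε M : ℝ≥0∞} (hε : ε ≠ 0) (hM : M ≠ ⊤) (hUC : ∀ x ∈ C, ∫⁻ w, U (G (x, w)) ∂d ≤ U x + M)
    (hUCT : ∀ x ∈ C \ T, ∫⁻ w, U (G (x, w)) ∂d + ε ≤ U x) {s : S} (hs : U s ≠ ⊤) (N : ℕ) :
    ℙ {ω | (∀ t, traj G s ω t ∈ C) ∧ ∀ t, N ≤ t → traj G s ω t ∉ T} = 0 := by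
  set B : ℕ → Set (ℕ → W) := fun k =>
    {ω | ∀ v < N + k, traj G s ω v ∈ C ∩ {x | N ≤ v → x ∉ T}}
  have hB k : MeasurableSet (B k) := measurableSet_setOf_forall_lt_traj hG s
    (fun _ => hC.inter ((MeasurableSet.const _).imp hT.compl)) _
  -- `∫ in B k, U (traj (N + k))` is finite and drops by `ε` times the measure of the event
  -- at each step, since `B k` contains the event
  refine ENNReal.eq_zero_of_forall_succ_add_mul_le (L := fun k =>
    ∫⁻ ω in B k, U (traj G s ω (N + k)) ∂ℙ) hε ?_ fun k => ?_
  · refine ne_top_of_le_ne_top (ENNReal.add_ne_top.2 ⟨hs, ENNReal.mul_ne_top (by simp) hM⟩)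
      ((lintegral_mono_set fun ω hω v hv => (hω v hv).1).trans
        (setLIntegral_forall_lt_traj_le d hG hC hU hUC s N))
  have hsucc : B (k + 1) = B k ∩ {ω | traj G s ω (N + k) ∈ C \ T} := by
    ext ω
    simp only [B, mem_inter_iff, mem_ofPred_eq, ← add_assoc, Nat.forall_lt_succ_right, mem_sdiff]
    exact and_congr_right fun _ => by simp
  calc ∫⁻ ω in B (k + 1), U (traj G s ω (N + k + 1)) ∂ℙ +
        ε * ℙ {ω | (∀ t, traj G s ω t ∈ C) ∧ ∀ t, N ≤ t → traj G s ω t ∉ T}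
      ≤ ∫⁻ ω in B (k + 1), U (traj G s ω (N + k + 1)) ∂ℙ + ε * ℙ (B (k + 1)) :=
        add_le_add le_rfl (mul_le_mul_right (measure_mono fun ω hω v _ =>
          ⟨hω.1 v, fun hv => hω.2 v hv⟩) ε)
    _ = ∫⁻ ω in B (k + 1), (∫⁻ w, U (G (traj G s ω (N + k), w)) ∂d + ε) ∂ℙ := by
        rw [lintegral_add_right _ measurable_const, setLIntegral_const, mul_comm,
          setLIntegral_traj_succ d hG s (t := N + k) (hB (k + 1))
            (dependsOn_forall_lt_traj G s (fun v => C ∩ {x | N ≤ v → x ∉ T}) (N + k)) hU]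
    _ ≤ ∫⁻ ω in B (k + 1), U (traj G s ω (N + k)) ∂ℙ :=
        setLIntegral_mono' (hB _) fun ω hω => hUCT _ (hsucc ▸ hω).2
    _ ≤ ∫⁻ ω in B k, U (traj G s ω (N + k)) ∂ℙ :=
        lintegral_mono_set (hsucc ▸ inter_subset_left)

theorem measure_forall_mem_finite_visits_eq_zero (hG : Measurable G) {C T : Set S}
    (hC : MeasurableSet C) (hT : MeasurableSet T) {U : S → ℝ≥0∞} (hU : Measurable U)
    {ε M : ℝ≥0∞} (hε : ε ≠ 0) (hM : M ≠ ⊤) (hUC : ∀ x ∈ C, ∫⁻ w, U (G (x, w)) ∂d ≤ U x + M)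
    (hUCT : ∀ x ∈ C \ T, ∫⁻ w, U (G (x, w)) ∂d + ε ≤ U x) {s : S} (hs : U s ≠ ⊤) :
    ℙ {ω | (∀ t, traj G s ω t ∈ C) ∧ {t | traj G s ω t ∈ T}.Finite} = 0 := by
  refine measure_mono_null (fun ω ⟨hω, hfin⟩ => ?_) (measure_iUnion_null
    (measure_forall_mem_forall_ge_notMem_eq_zero d hG hC hT hU hε hM hUC hUCT hs))
  obtain ⟨N, hN⟩ := hfin.bddAbove
  exact mem_iUnion.2 ⟨N + 1, hω, fun t ht htT => by have := hN htT; omega⟩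

theorem one_sub_le_measure_infinite_visits (hG : Measurable G) {C T : Set S}
    (hC : MeasurableSet C) (hT : MeasurableSet T) {Φ U : S → ℝ≥0∞} (hΦ : Measurable Φ)
    (hU : Measurable U) (hΦC : ∀ x ∈ C, ∫⁻ w, Φ (G (x, w)) ∂d ≤ Φ x)
    (hΦout : ∀ x ∉ C, 1 ≤ Φ x) {ε M : ℝ≥0∞} (hε : ε ≠ 0) (hM : M ≠ ⊤)
    (hUC : ∀ x ∈ C, ∫⁻ w, U (G (x, w)) ∂d ≤ U x + M)
    (hUCT : ∀ x ∈ C \ T, ∫⁻ w, U (G (x, w)) ∂d + ε ≤ U x) {s : S} (hs : U s ≠ ⊤) :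
    1 - Φ s ≤ ℙ {ω | {t | traj G s ω t ∈ T}.Infinite} := by
  rw [tsub_le_iff_right]
  calc 1 = ℙ univ := measure_univ.symm
    _ ≤ ℙ {ω | {t | traj G s ω t ∈ T}.Infinite} +
          ℙ {ω | (∀ t, traj G s ω t ∈ C) ∧ {t | traj G s ω t ∈ T}.Finite} +
          ℙ {ω | ∃ t, traj G s ω t ∉ C} := by
        refine (measure_mono fun ω _ => ?_).trans
          ((measure_union_le _ _).trans (add_le_add (measure_union_le _ _) le_rfl))
        by_cases hC : ∀ t, traj G s ω t ∈ C
        · by_cases hfin : {t | traj G s ω t ∈ T}.Finite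
          exacts [.inl (.inr ⟨hC, hfin⟩), .inl (.inl hfin)]
        · exact .inr (not_forall.1 hC)
    _ ≤ ℙ {ω | {t | traj G s ω t ∈ T}.Infinite} + Φ s := by
        rw [measure_forall_mem_finite_visits_eq_zero d hG hC hT hU hε hM hUC hUCT hs, add_zero]
        exact add_le_add le_rfl (measure_exists_traj_notMem_le d hG hC hΦ hΦC hΦout s)

end Trajectory

theorem integral_exp_mul_le_of_mem_Icc {Ω : Type*} [MeasurableSpace Ω] {μ : Measure Ω}
    [IsProbabilityMeasure μ] {Y : Ω → ℝ} (hY : AEMeasurable Y μ) {b M c ε : ℝ} (hε : 0 ≤ ε)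
    (hYM : ∀ᵐ ω ∂μ, Y ω ∈ Icc (b - M) b) (hYc : ∫ ω, Y ω ∂μ ≤ c - ε) :
    ∫ ω, exp (8 * ε / M ^ 2 * Y ω) ∂μ ≤ exp (8 * ε / M ^ 2 * c) := by
  set t := 8 * ε / M ^ 2
  have ht : 0 ≤ t := by positivity
  have hHoeffding := (ProbabilityTheory.hasSubgaussianMGF_of_mem_Icc hY hYM).mgf_le t
  have hmgf : ProbabilityTheory.mgf (fun ω => Y ω - ∫ ω, Y ω ∂μ) μ t =
      exp (t * -∫ ω, Y ω ∂μ) * ∫ ω, exp (t * Y ω) ∂μ := by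
    simp_rw [sub_eq_neg_add, ProbabilityTheory.mgf_const_add]
    rfl
  -- the choice `t = 8 ε / M²` makes the Hoeffding term `t² M² / 8` equal to `t ε`
  have hvar : (((‖b - (b - M)‖₊ / 2) ^ 2 : ℝ≥0) : ℝ) * t ^ 2 / 2 = t * ε := by
    rcases eq_or_ne M 0 with rfl | hM
    · simp [t]
    · simp only [sub_sub_cancel, NNReal.coe_pow, NNReal.coe_div, coe_nnnorm, norm_eq_abs,
        NNReal.coe_ofNat, div_pow, sq_abs, t]
      field_simp
      ring
  rw [hmgf, hvar] at hHoeffding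
  calc ∫ ω, exp (t * Y ω) ∂μ ≤ exp (t * ∫ ω, Y ω ∂μ) * exp (t * ε) := by
        rwa [mul_neg, exp_neg, inv_mul_le_iff₀ (exp_pos _)] at hHoeffding
    _ ≤ exp (t * c) := by
        rw [← exp_add, exp_le_exp]
        nlinarith

theorem exists_measurable_choice {α β : Type*} [MeasurableSpace α] [MeasurableSpace β]
    [Countable β] {P : α → β → Prop} (hP : ∀ b, MeasurableSet {a | P a b}) {g : α → β}
    (hg : Measurable g) :
    ∃ f : α → β, Measurable f ∧ ∀ a, P a (f a) ∨ (f a = g a ∧ ∀ b, ¬P a b) := by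
  classical
  rcases isEmpty_or_nonempty α with hα | ⟨⟨a₀⟩⟩
  · exact ⟨g, hg, isEmptyElim⟩
  have : Nonempty β := ⟨g a₀⟩
  obtain ⟨e, he⟩ := exists_surjective_nat β
  have hex : MeasurableSet {a | ∃ b, P a b} := by
    simpa only [ofPred_exists] using MeasurableSet.iUnion hP
  have hnone : MeasurableSet {a | ∀ b, ¬P a b} := by
    simpa only [ofPred_forall, compl_ofPred] using MeasurableSet.iInter fun b => (hP b).compl
  have hfind a : ∃ n, P a (e n) ∨ ∀ b, ¬P a b := by
    by_cases h : ∃ b, P a b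
    · obtain ⟨b, hb⟩ := h
      obtain ⟨n, rfl⟩ := he b
      exact ⟨n, .inl hb⟩
    · exact ⟨0, .inr (not_exists.1 h)⟩
  refine ⟨fun a => if ∃ b, P a b then e (Nat.find (hfind a)) else g a,
    Measurable.find (f := fun n a => if ∃ b, P a b then e n else g a)
      (p := fun n a => P a (e n) ∨ ∀ b, ¬P a b)
      (fun n => Measurable.ite hex measurable_const hg) (fun n => (hP (e n)).union hnone) hfind,
    fun a => ?_⟩
  by_cases h : ∃ b, P a b
  · dsimp only
    rw [if_pos h]
    exact .inl ((Nat.find_spec (hfind a)).resolve_right fun h' => h' _ h.choose_spec)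
  · exact .inr ⟨if_neg h, not_exists.1 h⟩

theorem measurableSet_setOf_ae {α β : Type*} [MeasurableSpace α] [MeasurableSpace β]
    (ν : Measure β) [SFinite ν] {p : α → β → Prop}
    (hp : MeasurableSet {z : α × β | p z.1 z.2}) :
    MeasurableSet {a | ∀ᵐ b ∂ν, p a b} := by
  have : {a | ∀ᵐ b ∂ν, p a b} = (fun a => ν (Prod.mk a ⁻¹' {z | p z.1 z.2}ᶜ)) ⁻¹' {0} := by
    ext a
    simp only [mem_ofPred_eq, mem_preimage, mem_singleton_iff, ae_iff]
    rfl
  exact this ▸ measurable_measure_prodMk_left hp.compl (measurableSet_singleton 0)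

section ProductSystem

variable {X W Q : Type*}

def prodStep (F : X × W → X) (πA : X × Q → Q) (p : (X × Q) × W) : X × Q :=
  (F (p.1.1, p.2), πA p.1)

theorem prodTraj_eq_traj (F : X × W → X) (πA : X × Q → Q) (x₀ : X) (qinit : Q) (ω : ℕ → W) :
    prodTraj F πA x₀ qinit ω = traj (prodStep F πA) (x₀, qinit) ω := by
  funext t
  induction t with
  | zero => rfl
  | succ t ih => simp only [prodTraj, traj, ih, prodStep]

theorem traj_eq_prodTraj_fst (F : X × W → X) (πA : X × Q → Q) (x₀ : X) (qinit : Q)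
    (ω : ℕ → W) (t : ℕ) : traj F x₀ ω t = (prodTraj F πA x₀ qinit ω t).1 := by
  induction t with
  | zero => rfl
  | succ t ih => simp only [prodTraj, traj, ih]

theorem measurable_prodStep [MeasurableSpace X] [MeasurableSpace W] [MeasurableSpace Q]
    {F : X × W → X} {πA : X × Q → Q} (hF : Measurable F) (hπA : Measurable πA) :
    Measurable (prodStep F πA) :=
  (hF.comp (measurable_fst.fst.prodMk measurable_snd)).prodMk (hπA.comp measurable_fst)

theorem accepts_of_infinite_prodTraj {A : Type*} {F : X × W → X} {πA : X × Q → Q}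
    {Δ : Q → A → Set Q} {L : X → A} (hπA : ∀ x q, πA (x, q) ∈ Δ q (L x)) {x₀ : X} {qinit : Q}
    {Acc : Set Q} {ω : ℕ → W} (h : {t | (prodTraj F πA x₀ qinit ω t).2 ∈ Acc}.Infinite) :
    Accepts qinit Δ Acc (L ∘ traj F x₀ ω) :=
  ⟨fun t => (prodTraj F πA x₀ qinit ω t).2, rfl,
    fun t => by rw [comp_apply, traj_eq_prodTraj_fst F πA x₀ qinit]; exact hπA _ _, h⟩

end ProductSystem

-- Leaving the invariant is penalised like reaching `Vsafe ≥ 0`.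
open Classical in
noncomputable def expPotential {S : Type*} (I : Set S) (V : S → ℝ) (c : ℝ) (s : S) : ℝ≥0∞ :=
  if s ∈ I then ENNReal.ofReal (exp (c * V s)) else 1

theorem measurable_expPotential {S : Type*} [MeasurableSpace S] {I : Set S} {V : S → ℝ}
    (hI : MeasurableSet I) (hV : Measurable V) (c : ℝ) : Measurable (expPotential I V c) :=
  Measurable.ite hI (measurable_const.mul hV).exp.ennreal_ofReal measurable_const

theorem one_le_expPotential {S : Type*} {I : Set S} {V : S → ℝ} {c : ℝ} (hc : 0 ≤ c) {s : S}
    (hs : s ∉ {s | s ∈ I ∧ V s < 0}) : 1 ≤ expPotential I V c s := by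
  unfold expPotential
  split_ifs with hsI
  · exact ENNReal.one_le_ofReal.2 (one_le_exp (mul_nonneg hc (not_lt.1 fun h => hs ⟨hsI, h⟩)))
  · exact le_rfl

section Certificate

variable {X W Q A : Type*} [MeasurableSpace W] (d : Measure W) (F : X × W → X) (Acc : Set Q)
  (I : Set (X × Q)) (Vsafe Vlive : X × Q → ℝ) (εS MS βS εL ML : ℝ)

/-- `SafetyCond` with its `∀ w` clauses weakened to `∀ᵐ w ∂d`, which keeps the set of certified
pairs measurable, together with the liveness clause of (e) or (f) that applies at `s`. -/
def IsCertifiedSucc (s : X × Q) (q' : Q) : Prop :=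
  (∀ᵐ w ∂d, (F (s.1, w), q') ∈ I ∧
    Vsafe (F (s.1, w), q') ∈ Icc (Vsafe s - βS - MS) (Vsafe s - βS)) ∧
  ∫ w, Vsafe (F (s.1, w), q') ∂d ≤ Vsafe s - εS ∧
  (s.2 ∈ Acc → ∫ w, Vlive (F (s.1, w), q') ∂d ≤ Vlive s + ML) ∧
  (s.2 ∉ Acc → ∫ w, Vlive (F (s.1, w), q') ∂d ≤ Vlive s - εL)

variable {d F Acc I Vsafe Vlive εS MS βS εL ML}

theorem measurableSet_isCertifiedSucc [MeasurableSpace X] [MeasurableSpace Q]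
    [DiscreteMeasurableSpace Q] [SFinite d] (hF : Measurable F) (hI : MeasurableSet I)
    (hVsafe : Measurable Vsafe) (hVlive : Measurable Vlive) (q' : Q) :
    MeasurableSet {s | IsCertifiedSucc d F Acc I Vsafe Vlive εS MS βS εL ML s q'} := by
  have hFq : Measurable fun z : (X × Q) × W => (F (z.1.1, z.2), q') :=
    (hF.comp (measurable_fst.fst.prodMk measurable_snd)).prodMk measurable_const
  have hint {V : X × Q → ℝ} (hV : Measurable V) :
      Measurable fun s : X × Q => ∫ w, V (F (s.1, w), q') ∂d :=
    ((hV.comp hFq).stronglyMeasurable.integral_prod_right').measurable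
  have hAcc : MeasurableSet {s : X × Q | s.2 ∈ Acc} := measurable_snd .of_discrete
  have hae : MeasurableSet {z : (X × Q) × W | (F (z.1.1, z.2), q') ∈ I ∧
      Vsafe (F (z.1.1, z.2), q') ∈ Icc (Vsafe z.1 - βS - MS) (Vsafe z.1 - βS)} := by
    simp only [mem_Icc, ofPred_and]
    exact (hFq hI).inter ((measurableSet_le (by fun_prop) (by fun_prop)).inter
      (measurableSet_le (by fun_prop) (by fun_prop)))
  exact (measurableSet_setOf_ae d hae).inter
    ((measurableSet_le (hint hVsafe) (hVsafe.sub_const _)).inter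
      ((hAcc.imp (measurableSet_le (hint hVlive) (hVlive.add_const _))).inter
        (hAcc.compl.imp (measurableSet_le (hint hVlive) (hVlive.sub_const _)))))

theorem exists_certified_controller [MeasurableSpace X] [MeasurableSpace Q]
    [DiscreteMeasurableSpace Q] [Countable Q] [MeasurableSpace A] [DiscreteMeasurableSpace A]
    [SFinite d] (hF : Measurable F) {L : X → A} (hL : Measurable L)
    {Δ : Q → A → Set Q} (hΔ : ∀ q σ, (Δ q σ).Nonempty) (hI : MeasurableSet I)
    (hVsafe : Measurable Vsafe) (hVlive : Measurable Vlive) {K : Set (X × Q)}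
    (hK : ∀ s ∈ K, ∃ q' ∈ Δ s.2 (L s.1),
      IsCertifiedSucc d F Acc I Vsafe Vlive εS MS βS εL ML s q') :
    ∃ πA : X × Q → Q, Measurable πA ∧ (∀ x q, πA (x, q) ∈ Δ q (L x)) ∧
      ∀ s ∈ K, IsCertifiedSucc d F Acc I Vsafe Vlive εS MS βS εL ML s (πA s) := by
  have hΔL (q' : Q) : MeasurableSet {s : X × Q | q' ∈ Δ s.2 (L s.1)} :=
    measurableSet_setOfPred.2 <| measurable_from_prod_countable_left fun q =>
      (Measurable.of_discrete (f := fun σ => q' ∈ Δ q σ)).comp hL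
  obtain ⟨πA, hπA, hπAP⟩ := exists_measurable_choice
    (P := fun (s : X × Q) q' =>
      q' ∈ Δ s.2 (L s.1) ∧ IsCertifiedSucc d F Acc I Vsafe Vlive εS MS βS εL ML s q')
    (fun q' => (hΔL q').inter (measurableSet_isCertifiedSucc hF hI hVsafe hVlive q'))
    (g := fun s => (hΔ s.2 (L s.1)).some)
    (measurable_from_prod_countable_left fun q =>
      (Measurable.of_discrete (f := fun σ => (hΔ q σ).some)).comp hL)
  refine ⟨πA, hπA, fun x q => ?_, fun s hs => ?_⟩
  · rcases hπAP (x, q) with h | ⟨h, -⟩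
    exacts [h.1, h ▸ (hΔ q (L x)).some_mem]
  · obtain ⟨q', hq'⟩ := hK s hs
    exact ((hπAP s).resolve_right fun h => h.2 q' hq').2

theorem exists_isCertifiedSucc {L : X → A} {Δ : Q → A → Set Q}
    (hc : ∀ x q, (x, q) ∈ I → q ∈ Qreject Δ Acc → 0 ≤ Vsafe (x, q))
    (he : ∀ x q, (x, q) ∈ I → q ∉ Acc ∪ Qreject Δ Acc → Vsafe (x, q) ≤ 0 →
      ∃ σ q', q' ∈ Δ q σ ∧ SafetyCond d F L I Vsafe εS MS βS x q σ q' ∧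
        (∫ w, Vlive (F (x, w), q') ∂d) ≤ Vlive (x, q) - εL)
    (hf : ∀ x q, (x, q) ∈ I → q ∈ Acc → Vsafe (x, q) ≤ 0 →
      ∃ σ q', q' ∈ Δ q σ ∧ SafetyCond d F L I Vsafe εS MS βS x q σ q' ∧
        (∫ w, Vlive (F (x, w), q') ∂d) ≤ Vlive (x, q) + ML)
    {s : X × Q} (hsI : s ∈ I) (hs : Vsafe s < 0) :
    ∃ q' ∈ Δ s.2 (L s.1), IsCertifiedSucc d F Acc I Vsafe Vlive εS MS βS εL ML s q' := by
  obtain ⟨x, q⟩ := s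
  have hsafe {σ q'} (h : SafetyCond d F L I Vsafe εS MS βS x q σ q') :
      (∀ᵐ w ∂d, (F (x, w), q') ∈ I ∧
        Vsafe (F (x, w), q') ∈ Icc (Vsafe (x, q) - βS - MS) (Vsafe (x, q) - βS)) ∧
      ∫ w, Vsafe (F (x, w), q') ∂d ≤ Vsafe (x, q) - εS :=
    ⟨ae_of_all _ fun w => ⟨h.2.1 w, by constructor <;> linarith [h.2.2.2 w]⟩, h.2.2.1⟩
  by_cases hq : q ∈ Acc
  · obtain ⟨σ, q', hq', hσq', hlive⟩ := hf x q hsI hq hs.le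
    exact ⟨q', hσq'.1 ▸ hq', (hsafe hσq').1, (hsafe hσq').2, fun _ => hlive, fun h => (h hq).elim⟩
  · have hrej : q ∉ Qreject Δ Acc := fun h => (hc x q hsI h).not_gt hs
    obtain ⟨σ, q', hq', hσq', hlive⟩ := he x q hsI (by simp [hq, hrej]) hs.le
    exact ⟨q', hσq'.1 ▸ hq', (hsafe hσq').1, (hsafe hσq').2, fun h => (hq h).elim, fun _ => hlive⟩

theorem IsCertifiedSucc.lintegral_expPotential_le [MeasurableSpace X] [MeasurableSpace Q]
    [IsProbabilityMeasure d] {s : X × Q} {q' : Q}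
    (h : IsCertifiedSucc d F Acc I Vsafe Vlive εS MS βS εL ML s q') (hF : Measurable F)
    (hVsafe : Measurable Vsafe) (hεS : 0 ≤ εS) (hsI : s ∈ I) :
    ∫⁻ w, expPotential I Vsafe (8 * εS / MS ^ 2) (F (s.1, w), q') ∂d ≤
      expPotential I Vsafe (8 * εS / MS ^ 2) s := by
  obtain ⟨hae, hmean, -⟩ := h
  have hY : AEMeasurable (fun w => Vsafe (F (s.1, w), q')) d := by fun_prop
  calc ∫⁻ w, expPotential I Vsafe (8 * εS / MS ^ 2) (F (s.1, w), q') ∂d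
      = ∫⁻ w, ENNReal.ofReal (exp (8 * εS / MS ^ 2 * Vsafe (F (s.1, w), q'))) ∂d :=
        lintegral_congr_ae (hae.mono fun w hw => if_pos hw.1)
    _ = ENNReal.ofReal (∫ w, exp (8 * εS / MS ^ 2 * Vsafe (F (s.1, w), q')) ∂d) :=
        (ofReal_integral_eq_lintegral_ofReal
          (ProbabilityTheory.integrable_exp_mul_of_mem_Icc hY (hae.mono fun w hw => hw.2))
          (ae_of_all _ fun _ => (exp_pos _).le)).symm
    _ ≤ ENNReal.ofReal (exp (8 * εS / MS ^ 2 * Vsafe s)) := ENNReal.ofReal_le_ofReal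
        (integral_exp_mul_le_of_mem_Icc hY hεS (hae.mono fun w hw => hw.2) hmean)
    _ = expPotential I Vsafe (8 * εS / MS ^ 2) s := (if_pos hsI).symm

theorem IsCertifiedSucc.ae_nonneg {s : X × Q} {q' : Q}
    (h : IsCertifiedSucc d F Acc I Vsafe Vlive εS MS βS εL ML s q')
    (hVlive : ∀ s ∈ I, 0 ≤ Vlive s) : 0 ≤ᵐ[d] fun w => Vlive (F (s.1, w), q') :=
  h.1.mono fun _ hw => hVlive _ hw.1

theorem IsCertifiedSucc.lintegral_ofReal_le {s : X × Q} {q' : Q}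
    (h : IsCertifiedSucc d F Acc I Vsafe Vlive εS MS βS εL ML s q')
    (hVlive : ∀ s ∈ I, 0 ≤ Vlive s) (hint : Integrable (fun w => Vlive (F (s.1, w), q')) d)
    (hεL : 0 ≤ εL) :
    ∫⁻ w, ENNReal.ofReal (Vlive (F (s.1, w), q')) ∂d ≤
      ENNReal.ofReal (Vlive s) + ENNReal.ofReal ML := by
  rw [← ofReal_integral_eq_lintegral_ofReal hint (h.ae_nonneg hVlive)]
  by_cases hs : s.2 ∈ Acc
  · exact (ENNReal.ofReal_le_ofReal (h.2.2.1 hs)).trans ENNReal.ofReal_add_le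
  · exact (ENNReal.ofReal_le_ofReal ((h.2.2.2 hs).trans (by linarith))).trans le_self_add

theorem IsCertifiedSucc.lintegral_ofReal_add_le {s : X × Q} {q' : Q}
    (h : IsCertifiedSucc d F Acc I Vsafe Vlive εS MS βS εL ML s q')
    (hVlive : ∀ s ∈ I, 0 ≤ Vlive s) (hint : Integrable (fun w => Vlive (F (s.1, w), q')) d)
    (hεL : 0 ≤ εL) (hs : s.2 ∉ Acc) :
    ∫⁻ w, ENNReal.ofReal (Vlive (F (s.1, w), q')) ∂d + ENNReal.ofReal εL ≤
      ENNReal.ofReal (Vlive s) := by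
  rw [← ofReal_integral_eq_lintegral_ofReal hint (h.ae_nonneg hVlive),
    ← ENNReal.ofReal_add (integral_nonneg_of_ae (h.ae_nonneg hVlive)) hεL]
  exact ENNReal.ofReal_le_ofReal (by linarith [h.2.2.2 hs])

end Certificate

theorem ldbsm_soundness_general
    {X W Q A : Type*}
    [MeasurableSpace X] [MeasurableSpace W]
    [Fintype Q] [MeasurableSpace Q] [DiscreteMeasurableSpace Q]
    [MeasurableSpace A] [DiscreteMeasurableSpace A]
    (d : Measure W) [IsProbabilityMeasure d]
    (dInf : Measure (ℕ → W)) [IsProbabilityMeasure dInf]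
    (hdInf : ∀ (n : ℕ) (s : ℕ → Set W), (∀ i, MeasurableSet (s i)) →
      dInf {ω | ∀ i < n, ω i ∈ s i} = ∏ i ∈ Finset.range n, d (s i))
    (F : X × W → X) (hF : Measurable F)
    (qinit : Q) (Δ : Q → A → Set Q) (hΔ : ∀ q σ, (Δ q σ).Nonempty)
    (Acc : Set Q)
    (L : X → A) (hL : Measurable L)
    (Init : Set X) (I : Set (X × Q)) (hI : MeasurableSet I)
    (Vsafe Vlive : X × Q → ℝ)
    (hVsafe : Measurable Vsafe) (hVlive : Measurable Vlive)
    (hIntLive : ∀ (x : X) (q' : Q), Integrable (fun w => Vlive (F (x, w), q')) d)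
    (ηS εS MS βS εL ML : ℝ)
    (hεS : 0 < εS) (hεL : 0 < εL)
    -- (a) Initial condition of the invariant
    (ha : ∀ x ∈ Init, (x, qinit) ∈ I)
    -- (b) Initial condition of the safety certificate
    (hb : ∀ x ∈ Init, Vsafe (x, qinit) ≤ ηS)
    -- (c) Safety condition of the safety certificate
    (hc : ∀ x q, (x, q) ∈ I → q ∈ Qreject Δ Acc → 0 ≤ Vsafe (x, q))
    -- (d) Non-negativity condition of the liveness certificate
    (hd : ∀ x q, (x, q) ∈ I → 0 ≤ Vlive (x, q))
    -- (e) Strict expected decrease of the liveness certificate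
    (he : ∀ x q, (x, q) ∈ I → q ∉ Acc ∪ Qreject Δ Acc → Vsafe (x, q) ≤ 0 →
      ∃ σ q', q' ∈ Δ q σ ∧ SafetyCond d F L I Vsafe εS MS βS x q σ q' ∧
        (∫ w, Vlive (F (x, w), q') ∂d) ≤ Vlive (x, q) - εL)
    -- (f) Bounded expected increase of the liveness certificate
    (hf : ∀ x q, (x, q) ∈ I → q ∈ Acc → Vsafe (x, q) ≤ 0 →
      ∃ σ q', q' ∈ Δ q σ ∧ SafetyCond d F L I Vsafe εS MS βS x q σ q' ∧
        (∫ w, Vlive (F (x, w), q') ∂d) ≤ Vlive (x, q) + ML)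
    (p : ℝ) (hp1 : p ≤ 1 - Real.exp (8 * ηS * εS / MS ^ 2)) :
    ∃ πA : X × Q → Q, Measurable πA ∧ (∀ x q, πA (x, q) ∈ Δ q (L x)) ∧
      ∀ x₀ ∈ Init,
        ENNReal.ofReal p ≤
            dInf {ω | {t | (prodTraj F πA x₀ qinit ω t).2 ∈ Acc}.Infinite} ∧
          dInf {ω | {t | (prodTraj F πA x₀ qinit ω t).2 ∈ Acc}.Infinite} ≤
            dInf {ω | Accepts qinit Δ Acc (L ∘ traj F x₀ ω)} := by
  obtain rfl := eq_infinitePi_of_forall_lt d hdInf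
  set C := {s | s ∈ I ∧ Vsafe s < 0}
  obtain ⟨πA, hπA, hπAΔ, hcert⟩ := exists_certified_controller hF hL hΔ hI hVsafe hVlive (K := C)
    fun s hs => exists_isCertifiedSucc hc he hf hs.1 hs.2
  refine ⟨πA, hπA, hπAΔ, fun x₀ hx₀ =>
    ⟨?_, measure_mono fun _ => accepts_of_infinite_prodTraj hπAΔ⟩⟩
  have hVlive₀ : ∀ s ∈ I, 0 ≤ Vlive s := fun s hs => hd s.1 s.2 hs
  simp only [prodTraj_eq_traj]
  refine le_trans ?_ (one_sub_le_measure_infinite_visits d (measurable_prodStep hF hπA)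
    (hI.inter (measurableSet_lt hVsafe measurable_const)) (measurable_snd (.of_discrete (s := Acc)))
    (measurable_expPotential hI hVsafe (8 * εS / MS ^ 2)) hVlive.ennreal_ofReal
    (fun s hs => (hcert s hs).lintegral_expPotential_le hF hVsafe hεS.le hs.1)
    (fun s hs => one_le_expPotential (by positivity) hs) (ENNReal.ofReal_pos.2 hεL).ne'
    ENNReal.ofReal_ne_top
    (fun s hs => (hcert s hs).lintegral_ofReal_le hVlive₀ (hIntLive _ _) hεL.le)
    (fun s hs => (hcert s hs.1).lintegral_ofReal_add_le hVlive₀ (hIntLive _ _) hεL.le hs.2)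
    (s := (x₀, qinit)) ENNReal.ofReal_ne_top)
  rw [expPotential, if_pos (ha x₀ hx₀), ← ENNReal.ofReal_one, ← ENNReal.ofReal_sub _ (exp_pos _).le]
  refine ENNReal.ofReal_le_ofReal (hp1.trans ?_)
  gcongr 1 - exp ?_
  rw [show 8 * ηS * εS / MS ^ 2 = 8 * εS / MS ^ 2 * ηS by ring]
  exact mul_le_mul_of_nonneg_left (hb x₀ hx₀) (by positivity)

theorem ldbsm_soundness
    {X W Q A : Type*}
    [MeasurableSpace X] [MeasurableSpace W]
    [Fintype Q] [MeasurableSpace Q] [DiscreteMeasurableSpace Q]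
    [Fintype A] [MeasurableSpace A] [DiscreteMeasurableSpace A]
    (d : Measure W) [IsProbabilityMeasure d]
    (dInf : Measure (ℕ → W)) [IsProbabilityMeasure dInf]
    (hdInf : ∀ (n : ℕ) (s : ℕ → Set W), (∀ i, MeasurableSet (s i)) →
      dInf {ω | ∀ i < n, ω i ∈ s i} = ∏ i ∈ Finset.range n, d (s i))
    (F : X × W → X) (hF : Measurable F)
    (qinit : Q) (Δ : Q → A → Set Q) (hΔ : ∀ q σ, (Δ q σ).Nonempty)
    (Acc : Set Q)
    (L : X → A) (hL : Measurable L)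
    (Init : Set X) (I : Set (X × Q)) (hI : MeasurableSet I)
    (Vsafe Vlive : X × Q → ℝ)
    (hVsafe : Measurable Vsafe) (hVlive : Measurable Vlive)
    (hIntSafe : ∀ (x : X) (q' : Q), Integrable (fun w => Vsafe (F (x, w), q')) d)
    (hIntLive : ∀ (x : X) (q' : Q), Integrable (fun w => Vlive (F (x, w), q')) d)
    (ηS εS MS βS εL ML : ℝ)
    (hηS : ηS ≤ 0) (hεS : 0 < εS) (hMS : 0 < MS) (hεL : 0 < εL) (hML : 0 < ML)
    -- (a) Initial condition of the invariant
    (ha : ∀ x ∈ Init, (x, qinit) ∈ I)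
    -- (b) Initial condition of the safety certificate
    (hb : ∀ x ∈ Init, Vsafe (x, qinit) ≤ ηS)
    -- (c) Safety condition of the safety certificate
    (hc : ∀ x q, (x, q) ∈ I → q ∈ Qreject Δ Acc → 0 ≤ Vsafe (x, q))
    -- (d) Non-negativity condition of the liveness certificate
    (hd : ∀ x q, (x, q) ∈ I → 0 ≤ Vlive (x, q))
    -- (e) Strict expected decrease of the liveness certificate
    (he : ∀ x q, (x, q) ∈ I → q ∉ Acc ∪ Qreject Δ Acc → Vsafe (x, q) ≤ 0 →
      ∃ σ q', q' ∈ Δ q σ ∧ SafetyCond d F L I Vsafe εS MS βS x q σ q' ∧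
        (∫ w, Vlive (F (x, w), q') ∂d) ≤ Vlive (x, q) - εL)
    -- (f) Bounded expected increase of the liveness certificate
    (hf : ∀ x q, (x, q) ∈ I → q ∈ Acc → Vsafe (x, q) ≤ 0 →
      ∃ σ q', q' ∈ Δ q σ ∧ SafetyCond d F L I Vsafe εS MS βS x q σ q' ∧
        (∫ w, Vlive (F (x, w), q') ∂d) ≤ Vlive (x, q) + ML)
    (p : ℝ) (hp0 : 0 ≤ p) (hp1 : p ≤ 1 - Real.exp (8 * ηS * εS / MS ^ 2)) :
    ∃ πA : X × Q → Q, Measurable πA ∧ (∀ x q, πA (x, q) ∈ Δ q (L x)) ∧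
      ∀ x₀ ∈ Init,
        ENNReal.ofReal p ≤
            dInf {ω | {t | (prodTraj F πA x₀ qinit ω t).2 ∈ Acc}.Infinite} ∧
          dInf {ω | {t | (prodTraj F πA x₀ qinit ω t).2 ∈ Acc}.Infinite} ≤
            dInf {ω | Accepts qinit Δ Acc (L ∘ traj F x₀ ω)} :=
  ldbsm_soundness_general d dInf hdInf F hF qinit Δ hΔ Acc L hL Init I hI Vsafe Vlive hVsafe hVlive
    hIntLive ηS εS MS βS εL ML hεS hεL ha hb hc hd he hf p hp1
end
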